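/- Let G be a finite connected graph, let l be an integer with 2^l ≤ |V(G)| < 2^{l+1}, and define M_i(v), m_i(v) for i ∈ {1, …, l}, v ∈ V(G) as the max of |E(G|_X)| + |∂_G X| and the min of |∂_G X|, respectively, over X ∈ 𝒞(G) with v ∈ X and ⌊|V(G)|/2^{i+1}⌋ < |X| ≤ ⌊|V(G)|/2^i⌋. Suppose the vertices a, b ∈ V(G) are such that (whenever defined) M_{l−i}(v) ≤ C·2^i and m_{l−i}(v) ≥ c·2^{((d−1)/d) i} for all 1 ≤ i ≤ l and v ∈ {a, b}, where d ≥ 2 is an integer and C, c > 0. Then there exists c' = c'(d, C, c) > 0 such that inf{Σ_{e ∈ E(G)} (∇_e φ)² : φ : V(G) → ℝ, φ(a) − φ(b) = 1} ≥ c'/l if d = 2, and ≥ c' if d ≥ 3. -/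

import Mathlib

open Classical in
/-- `|∂_G X|`: the number of edges of `G` with exactly one endpoint in `X`. -/
noncomputable def bdryCard {V : Type*} [Fintype V] (G : SimpleGraph V)
    (X : Finset V) : ℕ :=
  (Finset.univ.filter fun p : V × V => G.Adj p.1 p.2 ∧ p.1 ∈ X ∧ p.2 ∉ X).card

open Classical in
/-- `|E(G|_X)|`: the number of edges of `G` with both endpoints in `X`. -/
noncomputable def inEdgesCard {V : Type*} [Fintype V] (G : SimpleGraph V)
    (X : Finset V) : ℕ :=
  (Finset.univ.filter fun p : V × V => G.Adj p.1 p.2 ∧ p.1 ∈ X ∧ p.2 ∈ X).card / 2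

/-- `X ∈ 𝒞(G)`. -/
def memC {V : Type*} [Fintype V] (G : SimpleGraph V) (X : Finset V) : Prop :=
  X.Nonempty ∧ X ≠ Finset.univ ∧
    (SimpleGraph.induce (X : Set V) G).Connected ∧
    (SimpleGraph.induce ((X : Set V)ᶜ) G).Connected

/-- Sets over which `M_i(v)`, `m_i(v)` are defined. -/
def scaleFamily {V : Type*} [Fintype V] (G : SimpleGraph V) (v : V) (i : ℕ) :
    Set (Finset V) :=
  {X | memC G X ∧ v ∈ X ∧
    Fintype.card V / 2 ^ (i + 1) < X.card ∧ X.card ≤ Fintype.card V / 2 ^ i}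

/-- `M_i(v)`. -/
noncomputable def Mscale {V : Type*} [Fintype V] (G : SimpleGraph V)
    (v : V) (i : ℕ) : ℕ :=
  sSup ((fun X => inEdgesCard G X + bdryCard G X) '' scaleFamily G v i)

/-- `m_i(v)`. -/
noncomputable def mscale {V : Type*} [Fintype V] (G : SimpleGraph V)
    (v : V) (i : ℕ) : ℕ :=
  sInf ((fun X => bdryCard G X) '' scaleFamily G v i)

open Classical in
/-- `∑_{e ∈ E(G)} (∇_e φ)²` (half the sum over ordered adjacent pairs). -/
noncomputable def dirichletEnergy {V : Type*} [Fintype V] (G : SimpleGraph V)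
    (φ : V → ℝ) : ℝ :=
  (1/2) * ∑ u : V, ∑ w : V, if G.Adj u w then (φ u - φ w) ^ 2 else 0

/-!
The superlevel sets `{φ ≥ t}`, for `t` running through the values of `φ` in `(φ b, φ a]`, become
cuts in `𝒞(G)` around `a` once the components of their complements not containing `b` are filled
in. These cuts are nested, their weights (the gaps between consecutive values of `φ`) add up to
`φ a - φ b = 1`, and an edge crosses cuts of total weight at most `|∇φ|` (a discrete coarea
formula). Group the cuts by dyadic scale `j`: all cuts of scale `j` lie inside the first one,
which has at most `M_j` edges, and each is crossed by at least `m_j` edges, so Cauchy–Schwarz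
within and across scales gives `1 ≤ 2 (∑_{j ≤ l} 2 M_j / m_j²) ∑_e (∇_e φ)²`. The isoperimetric
hypotheses make the `j = l - i` term `O(2^{(2-d) i/d})`, and at `j = l` the only cut is `{a}`;
the sum is therefore `O(l)` for `d = 2` and `O(1)` for `d ≥ 3`.
-/

open Finset

lemma Finset.exists_monotone_enum (s : Finset ℝ) {lo hi : ℝ} (hlo : lo ∈ s) (hhi : hi ∈ s)
    (hs : ∀ t ∈ s, lo ≤ t ∧ t ≤ hi) :
    ∃ (m : ℕ) (v : ℕ → ℝ), Monotone v ∧ v 0 = lo ∧ v m = hi ∧ (∀ k < m, v k < v (k + 1)) ∧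
      ∀ k, ∀ t ∈ s, t < v (k + 1) → t ≤ v k := by
  have hne : s.Nonempty := ⟨lo, hlo⟩
  set m := s.card - 1
  have hcard : s.card = m + 1 := by have := hne.card_pos; omega
  set e := s.orderEmbOfFin hcard
  refine ⟨m, fun k => e (Fin.clamp k m), fun k k' hk => e.monotone ?_, ?_, ?_,
    fun k hk => e.strictMono ?_, fun k t ht htv => ?_⟩
  · simp only [Fin.clamp, Fin.mk_le_mk]; omega
  · change e ⟨0, by omega⟩ = lo
    rw [orderEmbOfFin_zero]
    exact le_antisymm (s.min'_le lo hlo) (s.le_min' _ _ fun t ht => (hs t ht).1)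
  · change e ⟨min m m, _⟩ = hi
    have := orderEmbOfFin_last hcard m.succ_pos
    simp only [Nat.add_sub_cancel] at this
    simp only [min_self, e, this]
    exact le_antisymm (s.max'_le _ _ fun t ht => (hs t ht).2) (s.le_max' hi hhi)
  · simp only [Fin.clamp, Fin.mk_lt_mk]; omega
  · obtain ⟨i, rfl⟩ : t ∈ Set.range e := by rw [range_orderEmbOfFin]; exact ht
    refine e.monotone ?_
    have := e.lt_iff_lt.1 htv
    simp only [Fin.clamp, Fin.lt_def, Fin.le_def] at this ⊢
    omega

lemma sum_sub_le_abs_of_monotone {v : ℕ → ℝ} (hv : Monotone v) {K : Finset ℕ} {r s : ℝ}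
    (hK : ∀ k ∈ K, s ≤ v k ∧ v (k + 1) ≤ r) : ∑ k ∈ K, (v (k + 1) - v k) ≤ |r - s| := by
  obtain ⟨m, hm⟩ := K.exists_nat_subset_range
  set w : ℕ → ℝ := fun k => max s (min (v k) r)
  have hw : Monotone w := fun k k' h => max_le_max le_rfl (min_le_min_right r (hv h))
  calc ∑ k ∈ K, (v (k + 1) - v k) = ∑ k ∈ K, (w (k + 1) - w k) := by
        refine sum_congr rfl fun k hk => ?_
        obtain ⟨hs, hr⟩ := hK k hk
        have hvk := hv k.le_succ
        simp only [w, min_eq_left hr, min_eq_left (hvk.trans hr), max_eq_right hs,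
          max_eq_right (hs.trans hvk)]
    _ ≤ ∑ k ∈ range m, (w (k + 1) - w k) :=
        sum_le_sum_of_subset_of_nonneg hm fun k _ _ => sub_nonneg.2 (hw k.le_succ)
    _ = w m - w 0 := sum_range_sub w m
    _ ≤ |r - s| := by
        have h1 : w m ≤ max s r := max_le_max le_rfl (min_le_right _ _)
        have h2 : s ≤ w 0 := le_max_left _ _
        have h3 : max s r - s ≤ |r - s| := by
          rcases le_total s r with h | h
          · rw [max_eq_right h, abs_of_nonneg (sub_nonneg.2 h)]
          · rw [max_eq_left h, sub_self]; exact abs_nonneg _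
        linarith

def dyadicScale (n t : ℕ) : ℕ := Nat.log 2 (n / t)

lemma dyadicScale_spec {n t : ℕ} (ht : 1 ≤ t) (htn : t ≤ n) :
    n / 2 ^ (dyadicScale n t + 1) < t ∧ t ≤ n / 2 ^ dyadicScale n t := by
  have hnt : n / t ≠ 0 := (Nat.div_pos htn ht).ne'
  constructor
  · rw [Nat.div_lt_iff_lt_mul (by positivity)]
    calc n < t * (n / t + 1) := Nat.lt_mul_div_succ n ht
      _ ≤ t * 2 ^ (dyadicScale n t + 1) := Nat.mul_le_mul_left t (Nat.lt_pow_succ_log_self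
          one_lt_two _)
  · rw [Nat.le_div_iff_mul_le (by positivity), mul_comm]
    calc 2 ^ dyadicScale n t * t ≤ n / t * t := Nat.mul_le_mul_right t (Nat.pow_log_le_self 2 hnt)
      _ ≤ n := Nat.div_mul_le_self n t

lemma dyadicScale_le {n t l : ℕ} (hn : n < 2 ^ (l + 1)) : dyadicScale n t ≤ l :=
  Nat.lt_succ_iff.1 (Nat.log_lt_of_lt_pow' l.succ_ne_zero ((Nat.div_le_self n t).trans_lt hn))

namespace SimpleGraph

variable {V : Type*} {G : SimpleGraph V} {S T : Set V} {a b x y : V}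

def reachWithin (G : SimpleGraph V) (S : Set V) (x : V) : Set V :=
  {y | ∃ w : G.Walk x y, ∀ z ∈ w.support, z ∈ S}

lemma reachWithin_subset : reachWithin G S x ⊆ S :=
  fun _ ⟨w, hw⟩ => hw _ w.end_mem_support

lemma mem_reachWithin_self (hx : x ∈ S) : x ∈ reachWithin G S x :=
  ⟨.nil, by simpa using hx⟩

lemma reachWithin_mono (h : S ⊆ T) : reachWithin G S x ⊆ reachWithin G T x :=
  fun _ ⟨w, hw⟩ => ⟨w, fun z hz => h (hw z hz)⟩

lemma mem_reachWithin_of_adj (hy : y ∈ reachWithin G S x) {z : V} (hyz : G.Adj y z)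
    (hz : z ∈ S) : z ∈ reachWithin G S x := by
  obtain ⟨w, hw⟩ := hy
  refine ⟨w.concat hyz, fun u hu => ?_⟩
  rw [Walk.support_concat, List.mem_append, List.mem_singleton] at hu
  rcases hu with hu | rfl
  exacts [hw u hu, hz]

lemma mem_reachWithin_reachWithin (hy : y ∈ reachWithin G S x) :
    y ∈ reachWithin G (reachWithin G S x) x := by
  classical
  obtain ⟨w, hw⟩ := hy
  exact ⟨w, fun z hz => ⟨w.takeUntil z hz,
    fun u hu => hw u (w.support_takeUntil_subset_support hz hu)⟩⟩

lemma induce_reachWithin_connected (hx : x ∈ S) : (G.induce (reachWithin G S x)).Connected := by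
  refine induce_connected_of_patches x (mem_reachWithin_self hx) fun hy => ?_
  obtain ⟨w, hw⟩ := mem_reachWithin_reachWithin hy
  exact ⟨{z | z ∈ w.support}, hw, w.start_mem_support, w.end_mem_support,
    w.connected_induce_support.preconnected _ _⟩

def fill (G : SimpleGraph V) (S : Set V) (a b : V) : Set V :=
  (reachWithin G (reachWithin G S a)ᶜ b)ᶜ

lemma reachWithin_subset_fill : reachWithin G S a ⊆ fill G S a b :=
  fun _ hz hzB => reachWithin_subset hzB hz

lemma mem_fill (ha : a ∈ S) : a ∈ fill G S a b :=
  reachWithin_subset_fill (mem_reachWithin_self ha)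

lemma notMem_fill (hb : b ∉ S) : b ∉ fill G S a b :=
  fun h => h (mem_reachWithin_self fun hbA => hb (reachWithin_subset hbA))

lemma fill_mono (h : S ⊆ T) : fill G S a b ⊆ fill G T a b :=
  fun _ hx hxB => hx (reachWithin_mono (Set.compl_subset_compl.2 (reachWithin_mono h)) hxB)

lemma mem_and_notMem_of_adj_fill (hxy : G.Adj x y) (hx : x ∈ fill G S a b)
    (hy : y ∉ fill G S a b) : x ∈ S ∧ y ∉ S := by
  have hyB := not_not.mp hy
  have hxA : x ∈ reachWithin G S a := by
    by_contra hxA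
    exact hx (mem_reachWithin_of_adj hyB hxy.symm hxA)
  exact ⟨reachWithin_subset hxA,
    fun hyS => reachWithin_subset hyB (mem_reachWithin_of_adj hxA hxy hyS)⟩

lemma mem_reachWithin_fill_of_walk (ha : a ∈ S) :
    ∀ {x : V}, G.Walk x a → x ∈ fill G S a b → x ∈ reachWithin G (fill G S a b) a
  | _, .nil, _ => mem_reachWithin_self (mem_fill ha)
  | x, .cons hxy w, hx => by
    by_cases hA : x ∈ reachWithin G S a
    · exact reachWithin_mono reachWithin_subset_fill (mem_reachWithin_reachWithin hA)
    · have hy : _ ∈ fill G S a b := fun hyB => hx (mem_reachWithin_of_adj hyB hxy.symm hA)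
      exact mem_reachWithin_of_adj (mem_reachWithin_fill_of_walk ha w hy) hxy.symm hx

lemma induce_fill_connected (hG : G.Connected) (ha : a ∈ S) :
    (G.induce (fill G S a b)).Connected := by
  have h : reachWithin G (fill G S a b) a = fill G S a b :=
    reachWithin_subset.antisymm fun x hx =>
      mem_reachWithin_fill_of_walk ha (hG.preconnected x a).some hx
  exact h ▸ induce_reachWithin_connected (mem_fill ha)

lemma induce_compl_fill_connected (hb : b ∉ S) : (G.induce (fill G S a b)ᶜ).Connected := by
  rw [fill, compl_compl]
  exact induce_reachWithin_connected fun hbA => hb (reachWithin_subset hbA)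

end SimpleGraph

section Cuts

variable {V : Type*} [Fintype V] {G : SimpleGraph V} {X : Finset V} {v : V} {j : ℕ}

open Classical in
noncomputable def bdryPairs (G : SimpleGraph V) (X : Finset V) : Finset (V × V) :=
  univ.filter fun p => G.Adj p.1 p.2 ∧ p.1 ∈ X ∧ p.2 ∉ X

lemma card_bdryPairs : #(bdryPairs G X) = bdryCard G X := rfl

lemma mem_bdryPairs {p : V × V} : p ∈ bdryPairs G X ↔ G.Adj p.1 p.2 ∧ p.1 ∈ X ∧ p.2 ∉ X := by
  simp [bdryPairs]

lemma one_le_bdryCard (hG : G.Connected) (hX : memC G X) : 1 ≤ bdryCard G X := by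
  obtain ⟨⟨x, hx⟩, hXu, -, -⟩ := hX
  obtain ⟨y, hy⟩ : ∃ y, y ∉ X := by
    by_contra! h
    exact hXu (eq_univ_of_forall h)
  obtain ⟨d, -, hd⟩ := (hG.preconnected x y).some.exists_boundary_dart (X : Set V) hx hy
  rw [← card_bdryPairs, Nat.one_le_iff_ne_zero, ← pos_iff_ne_zero, card_pos]
  exact ⟨(d.fst, d.snd), mem_bdryPairs.2 ⟨d.adj, hd⟩⟩

open Classical in
/-- The ordered pair that `inEdgesCard` may lose to rounding is paid for by a boundary edge. -/
lemma card_adj_fst_mem_le (hX : 1 ≤ bdryCard G X) :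
    #(univ.filter fun p : V × V => G.Adj p.1 p.2 ∧ p.1 ∈ X) ≤
      2 * (inEdgesCard G X + bdryCard G X) := by
  set n := #(univ.filter fun p : V × V => G.Adj p.1 p.2 ∧ p.1 ∈ X ∧ p.2 ∈ X)
  have hsplit : #(univ.filter fun p : V × V => G.Adj p.1 p.2 ∧ p.1 ∈ X) = n + bdryCard G X := by
    rw [← card_filter_add_card_filter_not (fun p : V × V => p.2 ∈ X), filter_filter,
      filter_filter]
    simp only [and_assoc]
    rfl
  have hin : inEdgesCard G X = n / 2 := rfl
  omega

lemma sq_sum_le_of_support (hX : 1 ≤ bdryCard G X) (f : V × V → ℝ)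
    (hf : ∀ p, f p ≠ 0 → G.Adj p.1 p.2 ∧ p.1 ∈ X) :
    (∑ p, f p) ^ 2 ≤ 2 * (inEdgesCard G X + bdryCard G X) * ∑ p, f p ^ 2 := by
  classical
  set T := univ.filter fun p : V × V => G.Adj p.1 p.2 ∧ p.1 ∈ X
  calc (∑ p, f p) ^ 2 = (∑ p ∈ T, f p) ^ 2 := by rw [sum_filter_of_ne fun p _ => hf p]
    _ ≤ #T * ∑ p ∈ T, f p ^ 2 := sq_sum_le_card_mul_sum_sq
    _ ≤ 2 * (inEdgesCard G X + bdryCard G X) * ∑ p, f p ^ 2 := by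
      refine mul_le_mul (by exact_mod_cast card_adj_fst_mem_le hX)
        (sum_le_univ_sum_of_nonneg fun _ => sq_nonneg _) (sum_nonneg fun _ _ => sq_nonneg _)
        (by positivity)

open Classical in
lemma memC_fill (hG : G.Connected) {S : Set V} {a b : V} (ha : a ∈ S) (hb : b ∉ S) :
    memC G (G.fill S a b).toFinset := by
  refine ⟨⟨a, by simpa using SimpleGraph.mem_fill ha⟩, fun h => ?_, ?_, ?_⟩
  · have hbX : b ∈ (G.fill S a b).toFinset := h ▸ mem_univ b
    exact SimpleGraph.notMem_fill hb (Set.mem_toFinset.1 hbX)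
  · rw [Set.coe_toFinset]; exact SimpleGraph.induce_fill_connected hG ha
  · rw [Set.coe_toFinset]; exact SimpleGraph.induce_compl_fill_connected hb

lemma mscale_le (hX : X ∈ scaleFamily G v j) : mscale G v j ≤ bdryCard G X :=
  Nat.sInf_le ⟨X, hX, rfl⟩

lemma le_Mscale (hX : X ∈ scaleFamily G v j) : inEdgesCard G X + bdryCard G X ≤ Mscale G v j :=
  le_csSup ((Set.toFinite _).image _).bddAbove ⟨X, hX, rfl⟩

lemma one_le_mscale (hG : G.Connected) (h : (scaleFamily G v j).Nonempty) : 1 ≤ mscale G v j :=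
  le_csInf (h.image _) (by rintro _ ⟨X, hX, rfl⟩; exact one_le_bdryCard hG hX.1)

end Cuts

section NestedCuts

variable {V : Type*} [Fintype V] {G : SimpleGraph V} {a v : V} {j : ℕ}

noncomputable def scaleWeight (G : SimpleGraph V) (v : V) (j : ℕ) : ℝ :=
  2 * Mscale G v j / (mscale G v j : ℝ) ^ 2

lemma scaleWeight_nonneg : 0 ≤ scaleWeight G v j := by
  unfold scaleWeight; positivity

open Classical in
lemma two_mul_dirichletEnergy (φ : V → ℝ) :
    2 * dirichletEnergy G φ =
      ∑ p : V × V, if G.Adj p.1 p.2 then (φ p.1 - φ p.2) ^ 2 else 0 := by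
  rw [dirichletEnergy, ← Fintype.sum_prod_type']; ring

lemma dirichletEnergy_nonneg (φ : V → ℝ) : 0 ≤ dirichletEnergy G φ := by
  have h : 0 ≤ 2 * dirichletEnergy G φ := by
    rw [two_mul_dirichletEnergy]
    exact sum_nonneg fun p _ => by split_ifs <;> positivity
  linarith

open Classical in
noncomputable def crossingWeight (G : SimpleGraph V) (X : ℕ → Finset V) (w : ℕ → ℝ)
    (K : Finset ℕ) (p : V × V) : ℝ :=
  ∑ k ∈ K, if p ∈ bdryPairs G (X k) then w k else 0

variable {X : ℕ → Finset V} {w : ℕ → ℝ} {K : Finset ℕ}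

lemma crossingWeight_nonneg (hw : ∀ k, 0 ≤ w k) (p : V × V) : 0 ≤ crossingWeight G X w K p :=
  sum_nonneg fun k _ => by split_ifs; exacts [hw k, le_rfl]

lemma crossingWeight_of_not_adj {p : V × V} (hp : ¬ G.Adj p.1 p.2) :
    crossingWeight G X w K p = 0 :=
  sum_eq_zero fun _ _ => if_neg fun h => hp (mem_bdryPairs.1 h).1

lemma sum_crossingWeight :
    ∑ p, crossingWeight G X w K p = ∑ k ∈ K, w k * bdryCard G (X k) := by
  classical
  unfold crossingWeight
  rw [sum_comm]
  refine sum_congr rfl fun k _ => ?_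
  rw [sum_ite_mem, univ_inter, sum_const, card_bdryPairs, nsmul_eq_mul, mul_comm]

/-- All the cuts `X k`, `k ∈ K`, lie in the first one, which has at most `Mscale` edges, and each
of them is crossed by at least `mscale` edges. -/
lemma sq_sum_le_scaleWeight_mul (hG : G.Connected) (hX : Antitone X) (hw : ∀ k, 0 ≤ w k)
    (hK : ∀ k ∈ K, X k ∈ scaleFamily G a j) :
    (∑ k ∈ K, w k) ^ 2 ≤ scaleWeight G a j * ∑ p, crossingWeight G X w K p ^ 2 := by
  classical
  rcases K.eq_empty_or_nonempty with rfl | hne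
  · simpa using mul_nonneg scaleWeight_nonneg (sum_nonneg fun _ _ => sq_nonneg _)
  have hk₀ : X (K.min' hne) ∈ scaleFamily G a j := hK _ (K.min'_mem hne)
  have hm : (1 : ℝ) ≤ mscale G a j := by exact_mod_cast one_le_mscale hG ⟨_, hk₀⟩
  have hsupp : ∀ p, crossingWeight G X w K p ≠ 0 → G.Adj p.1 p.2 ∧ p.1 ∈ X (K.min' hne) := by
    intro p hp
    obtain ⟨k, hk, hpk⟩ := exists_ne_zero_of_sum_ne_zero hp
    obtain ⟨hadj, hp1, -⟩ := mem_bdryPairs.1 (ite_ne_right_iff.1 hpk).1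
    exact ⟨hadj, hX (K.min'_le k hk) hp1⟩
  have hlow : (mscale G a j : ℝ) * ∑ k ∈ K, w k ≤ ∑ p, crossingWeight G X w K p := by
    rw [sum_crossingWeight, mul_sum]
    refine sum_le_sum fun k hk => ?_
    rw [mul_comm]
    exact mul_le_mul_of_nonneg_left (by exact_mod_cast mscale_le (hK k hk)) (hw k)
  have hup : (∑ p, crossingWeight G X w K p) ^ 2 ≤
      2 * Mscale G a j * ∑ p, crossingWeight G X w K p ^ 2 := by
    refine (sq_sum_le_of_support (one_le_bdryCard hG hk₀.1) _ hsupp).trans ?_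
    gcongr
    exact_mod_cast le_Mscale hk₀
  rw [scaleWeight, div_mul_eq_mul_div, le_div_iff₀ (by positivity)]
  calc (∑ k ∈ K, w k) ^ 2 * (mscale G a j : ℝ) ^ 2 = ((mscale G a j : ℝ) * ∑ k ∈ K, w k) ^ 2 := by
        ring
    _ ≤ (∑ p, crossingWeight G X w K p) ^ 2 :=
        pow_le_pow_left₀ (mul_nonneg (by positivity) (sum_nonneg fun k _ => hw k)) hlow 2
    _ ≤ 2 * Mscale G a j * ∑ p, crossingWeight G X w K p ^ 2 := hup

lemma sum_sum_sq_crossingWeight_le {φ : V → ℝ} {m : ℕ} (hw : ∀ k, 0 ≤ w k) (s : ℕ → ℕ)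
    {J : Finset ℕ} (hs : ∀ k ∈ range m, s k ∈ J)
    (hcross : ∀ p, crossingWeight G X w (range m) p ≤ |φ p.1 - φ p.2|) :
    ∑ j ∈ J, ∑ p, crossingWeight G X w ((range m).filter (s · = j)) p ^ 2 ≤
      2 * dirichletEnergy G φ := by
  classical
  rw [sum_comm, two_mul_dirichletEnergy]
  refine sum_le_sum fun p _ => ?_
  have hfib : ∑ j ∈ J, crossingWeight G X w ((range m).filter (s · = j)) p =
      crossingWeight G X w (range m) p :=
    sum_fiberwise_of_maps_to hs _
  calc ∑ j ∈ J, crossingWeight G X w ((range m).filter (s · = j)) p ^ 2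
      ≤ (∑ j ∈ J, crossingWeight G X w ((range m).filter (s · = j)) p) ^ 2 :=
        sum_sq_le_sq_sum_of_nonneg fun j _ => crossingWeight_nonneg hw p
    _ = crossingWeight G X w (range m) p ^ 2 := by rw [hfib]
    _ ≤ if G.Adj p.1 p.2 then (φ p.1 - φ p.2) ^ 2 else 0 := by
        split_ifs with hadj
        · rw [← sq_abs (φ p.1 - φ p.2)]
          exact pow_le_pow_left₀ (crossingWeight_nonneg hw p) (hcross p) 2
        · rw [crossingWeight_of_not_adj hadj, sq, mul_zero]

theorem one_le_two_mul_sum_scaleWeight_mul_dirichletEnergy_of_cuts (hG : G.Connected)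
    {l m : ℕ} (hn : Fintype.card V < 2 ^ (l + 1)) {φ : V → ℝ} (hX : Antitone X)
    (hXC : ∀ k < m, memC G (X k) ∧ a ∈ X k) (hw : ∀ k, 0 ≤ w k)
    (hw1 : ∑ k ∈ range m, w k = 1)
    (hcross : ∀ p, crossingWeight G X w (range m) p ≤ |φ p.1 - φ p.2|) :
    1 ≤ 2 * (∑ j ∈ range (l + 1), scaleWeight G a j) * dirichletEnergy G φ := by
  set s : ℕ → ℕ := fun k => dyadicScale (Fintype.card V) #(X k)
  have hs : ∀ k ∈ range m, s k ∈ range (l + 1) :=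
    fun _ _ => mem_range.2 (Nat.lt_succ_of_le (dyadicScale_le hn))
  have hfam : ∀ j, ∀ k ∈ (range m).filter (s · = j), X k ∈ scaleFamily G a j := by
    intro j k hk
    obtain ⟨hkm, rfl⟩ := mem_filter.1 hk
    obtain ⟨hC, ha⟩ := hXC k (mem_range.1 hkm)
    exact ⟨hC, ha, dyadicScale_spec (card_pos.2 ⟨a, ha⟩) (card_le_univ _)⟩
  calc (1 : ℝ) = (∑ j ∈ range (l + 1), ∑ k ∈ (range m).filter (s · = j), w k) ^ 2 := by
        rw [sum_fiberwise_of_maps_to hs, hw1, one_pow]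
    _ ≤ (∑ j ∈ range (l + 1), scaleWeight G a j) *
        ∑ j ∈ range (l + 1), ∑ p, crossingWeight G X w ((range m).filter (s · = j)) p ^ 2 :=
        sum_sq_le_sum_mul_sum_of_sq_le_mul _ (fun _ _ => scaleWeight_nonneg)
          (fun _ _ => sum_nonneg fun _ _ => sq_nonneg _)
          fun j _ => sq_sum_le_scaleWeight_mul hG hX hw (hfam j)
    _ ≤ (∑ j ∈ range (l + 1), scaleWeight G a j) * (2 * dirichletEnergy G φ) :=
        mul_le_mul_of_nonneg_left (sum_sum_sq_crossingWeight_le hw s hs hcross)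
          (sum_nonneg fun _ _ => scaleWeight_nonneg)
    _ = 2 * (∑ j ∈ range (l + 1), scaleWeight G a j) * dirichletEnergy G φ := by ring

end NestedCuts

section LevelSets

variable {V : Type*} [Fintype V] {G : SimpleGraph V}

lemma exists_levels {φ : V → ℝ} {a b : V} (hab : φ b ≤ φ a) :
    ∃ (m : ℕ) (v : ℕ → ℝ), Monotone v ∧ v 0 = φ b ∧ v m = φ a ∧
      (∀ k < m, v k < v (k + 1)) ∧ ∀ k < m, ∀ x, φ x < v (k + 1) → φ x ≤ v k := by
  classical
  have hmem : ∀ x, φ b ≤ φ x → φ x ≤ φ a →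
      φ x ∈ (univ.image φ).filter fun t => φ b ≤ t ∧ t ≤ φ a :=
    fun x h1 h2 => mem_filter.2 ⟨mem_image_of_mem φ (mem_univ x), h1, h2⟩
  obtain ⟨m, v, hv, hv0, hvm, hvlt, hconsec⟩ := Finset.exists_monotone_enum _
    (hmem b le_rfl hab) (hmem a hab le_rfl) fun t ht => (mem_filter.1 ht).2
  refine ⟨m, v, hv, hv0, hvm, hvlt, fun k hk x hx => ?_⟩
  rcases lt_or_ge (φ x) (φ b) with hxb | hxb
  · exact (hv0 ▸ hxb.le).trans (hv k.zero_le)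
  · exact hconsec k _ (hmem x hxb (hvm ▸ hx.le.trans (hv hk))) hx

theorem one_le_two_mul_sum_scaleWeight_mul_dirichletEnergy (hG : G.Connected) {l : ℕ}
    (hn : Fintype.card V < 2 ^ (l + 1)) {φ : V → ℝ} {a b : V} (hφ : φ a - φ b = 1) :
    1 ≤ 2 * (∑ j ∈ range (l + 1), scaleWeight G a j) * dirichletEnergy G φ := by
  classical
  obtain ⟨m, v, hv, hv0, hvm, hvlt, hgap⟩ := exists_levels (a := a) (b := b) (by linarith)
  set S : ℕ → Set V := fun k => {x | v (k + 1) ≤ φ x}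
  have hS : ∀ k < m, a ∈ S k ∧ b ∉ S k := fun k hk =>
    ⟨(hv (Nat.succ_le_of_lt hk)).trans_eq hvm,
      not_le.2 ((hv0.symm.le.trans (hv k.zero_le)).trans_lt (hvlt k hk))⟩
  refine one_le_two_mul_sum_scaleWeight_mul_dirichletEnergy_of_cuts hG hn
    (X := fun k => (G.fill (S k) a b).toFinset) (w := fun k => v (k + 1) - v k) (m := m)
    (fun k k' hkk' => Set.toFinset_subset_toFinset.2 (SimpleGraph.fill_mono
      fun x hx => (hv (by omega : k + 1 ≤ k' + 1)).trans hx))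
    (fun k hk => ⟨memC_fill hG (hS k hk).1 (hS k hk).2,
      by simpa using SimpleGraph.mem_fill (hS k hk).1⟩)
    (fun k => sub_nonneg.2 (hv k.le_succ)) ?_ fun p => ?_
  · rw [sum_range_sub (fun k => v k) m, hvm, hv0, hφ]
  · rw [crossingWeight, ← sum_filter]
    refine sum_sub_le_abs_of_monotone hv fun k hk => ?_
    obtain ⟨hkm, hp⟩ := mem_filter.1 hk
    obtain ⟨hadj, h1, h2⟩ := mem_bdryPairs.1 hp
    rw [Set.mem_toFinset] at h1 h2
    obtain ⟨hS1, hS2⟩ := SimpleGraph.mem_and_notMem_of_adj_fill hadj h1 h2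
    exact ⟨hgap k (mem_range.1 hkm) _ (not_le.1 hS2), hS1⟩

end LevelSets

section ScaleWeights

variable {V : Type*} [Fintype V] {G : SimpleGraph V} {a v : V} {j : ℕ}

lemma scaleWeight_eq_zero (h : scaleFamily G v j = ∅) : scaleWeight G v j = 0 := by
  simp [scaleWeight, Mscale, h]

/-- At the finest scale the only candidate cut is `{a}`, so that `Mscale = mscale`. -/
lemma scaleWeight_le_two (hG : G.Connected) {l : ℕ} (hn : Fintype.card V < 2 ^ (l + 1)) :
    scaleWeight G a l ≤ 2 := by
  classical
  rcases (scaleFamily G a l).eq_empty_or_nonempty with h | ⟨Y, hY⟩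
  · rw [scaleWeight_eq_zero h]; norm_num
  have hsingle : ∀ X ∈ scaleFamily G a l, X = {a} := by
    intro X hX
    have hle : Fintype.card V / 2 ^ l < 2 := by
      rw [Nat.div_lt_iff_lt_mul (by positivity)]; rw [pow_succ] at hn; omega
    have hcard : #X ≤ 1 := by have := hX.2.2.2; omega
    exact eq_singleton_iff_unique_mem.2 ⟨hX.2.1, fun x hx => card_le_one.1 hcard x hx a hX.2.1⟩
  have hfam : scaleFamily G a l = {{a}} :=
    Set.eq_singleton_iff_unique_mem.2 ⟨hsingle Y hY ▸ hY, hsingle⟩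
  have hin : inEdgesCard G {a} = 0 := by
    unfold inEdgesCard
    rw [filter_false_of_mem, card_empty, Nat.zero_div]
    rintro ⟨x, y⟩ - ⟨hxy, hx, hy⟩
    obtain rfl : x = a := mem_singleton.1 hx
    obtain rfl : y = x := mem_singleton.1 hy
    exact G.irrefl hxy
  have hb : (1 : ℝ) ≤ bdryCard G {a} := by
    exact_mod_cast one_le_bdryCard hG (hfam ▸ Set.mem_singleton {a} : {a} ∈ scaleFamily G a l).1
  rw [scaleWeight, Mscale, mscale, hfam, Set.image_singleton, Set.image_singleton,
    csSup_singleton, csInf_singleton, hin, zero_add, div_le_iff₀ (by positivity)]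
  nlinarith

lemma scaleWeight_le_of_isoperimetry {C c β : ℝ} {i : ℕ} (hc : 0 < c)
    (hM : (Mscale G v j : ℝ) ≤ C * 2 ^ i) (hm : c * (2 : ℝ) ^ (β * i) ≤ mscale G v j) :
    scaleWeight G v j ≤ 2 * C / c ^ 2 * ((2 : ℝ) ^ (1 - 2 * β)) ^ i := by
  have hpow : ((2 : ℝ) ^ (1 - 2 * β)) ^ i = (2 : ℝ) ^ i / ((2 : ℝ) ^ (β * i)) ^ 2 := by
    rw [← Real.rpow_mul_natCast zero_le_two, ← Real.rpow_mul_natCast zero_le_two,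
      ← Real.rpow_natCast, ← Real.rpow_sub two_pos]
    ring_nf
  have hB : 0 < c * (2 : ℝ) ^ (β * i) := by positivity
  calc scaleWeight G v j ≤ 2 * (C * 2 ^ i) / (c * (2 : ℝ) ^ (β * i)) ^ 2 :=
        div_le_div₀ (by linarith [(Nat.cast_nonneg _ : (0 : ℝ) ≤ Mscale G v j)]) (by linarith)
          (by positivity) (pow_le_pow_left₀ hB.le hm 2)
    _ = 2 * C / c ^ 2 * ((2 : ℝ) ^ (1 - 2 * β)) ^ i := by
        rw [hpow]; field_simp

theorem sum_scaleWeight_le (hG : G.Connected) {l : ℕ} (hn : Fintype.card V < 2 ^ (l + 1))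
    {C c β : ℝ} (hC : 0 ≤ C) (hc : 0 < c)
    (hyp : ∀ i, 1 ≤ i → i ≤ l → (scaleFamily G a (l - i)).Nonempty →
      (Mscale G a (l - i) : ℝ) ≤ C * 2 ^ i ∧ c * (2 : ℝ) ^ (β * i) ≤ mscale G a (l - i)) :
    ∑ j ∈ range (l + 1), scaleWeight G a j ≤
      2 + 2 * C / c ^ 2 * ∑ i ∈ range l, ((2 : ℝ) ^ (1 - 2 * β)) ^ (i + 1) := by
  have hterm : ∀ j ∈ range l,
      scaleWeight G a j ≤ 2 * C / c ^ 2 * ((2 : ℝ) ^ (1 - 2 * β)) ^ (l - j) := by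
    intro j hj
    have hlj : l - (l - j) = j := by have := mem_range.1 hj; omega
    rcases (scaleFamily G a j).eq_empty_or_nonempty with h | h
    · rw [scaleWeight_eq_zero h]; positivity
    · obtain ⟨hM, hm⟩ := hyp (l - j) (by have := mem_range.1 hj; omega) (l.sub_le j)
        (by rwa [hlj])
      rw [hlj] at hM hm
      exact scaleWeight_le_of_isoperimetry hc hM hm
  have hreflect : ∑ j ∈ range l, ((2 : ℝ) ^ (1 - 2 * β)) ^ (l - j) =
      ∑ i ∈ range l, ((2 : ℝ) ^ (1 - 2 * β)) ^ (i + 1) := by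
    rw [← sum_range_reflect]
    refine sum_congr rfl fun i hi => ?_
    rw [show l - (l - 1 - i) = i + 1 by have := mem_range.1 hi; omega]
  rw [sum_range_succ, add_comm, ← hreflect, mul_sum]
  exact add_le_add (scaleWeight_le_two hG hn) (sum_le_sum hterm)

end ScaleWeights

lemma sum_pow_succ_le_five {ρ : ℝ} (h0 : 0 ≤ ρ) (h3 : ρ ^ 3 ≤ 1 / 2) (l : ℕ) :
    ∑ i ∈ range l, ρ ^ (i + 1) ≤ 5 := by
  have hρ : ρ ≤ 5 / 6 := by
    by_contra! h
    have := pow_lt_pow_left₀ h (by norm_num) (by norm_num : 3 ≠ 0)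
    norm_num at this
    linarith
  calc ∑ i ∈ range l, ρ ^ (i + 1) = ρ * ∑ i ∈ Ico 0 l, ρ ^ i := by
        rw [mul_sum, ← range_eq_Ico]; simp only [pow_succ, mul_comm]
    _ ≤ ρ * (ρ ^ 0 / (1 - ρ)) :=
        mul_le_mul_of_nonneg_left (geom_sum_Ico_le_of_lt_one h0 (by linarith)) h0
    _ ≤ 5 := by
        rw [pow_zero, mul_one_div, div_le_iff₀ (by linarith)]
        linarith

lemma two_rpow_pow_three_le {d : ℕ} (hd : 3 ≤ d) :
    ((2 : ℝ) ^ (1 - 2 * ((d - 1 : ℝ) / d))) ^ 3 ≤ 1 / 2 := by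
  have hd' : (3 : ℝ) ≤ d := by exact_mod_cast hd
  rw [← Real.rpow_natCast, ← Real.rpow_mul zero_le_two, one_div, ← Real.rpow_neg_one]
  refine Real.rpow_le_rpow_of_exponent_le one_le_two ?_
  rw [show (1 - 2 * ((d - 1 : ℝ) / d)) * ((3 : ℕ) : ℝ) = 3 * (2 - d) / d by field_simp; ring,
    div_le_iff₀ (by linarith)]
  linarith

theorem quadratic_energy_estimate_general (d : ℕ) (C c : ℝ)
    (hC : 0 < C) (hc : 0 < c) :
    ∃ c' : ℝ, 0 < c' ∧
      ∀ (V : Type) (_ : Fintype V) (G : SimpleGraph V), G.Connected →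
      ∀ l : ℕ, 2 ^ l ≤ Fintype.card V → Fintype.card V < 2 ^ (l + 1) →
      ∀ a b : V, a ≠ b →
      (∀ i : ℕ, 1 ≤ i → i ≤ l → ∀ v ∈ ({a, b} : Set V),
        (scaleFamily G v (l - i)).Nonempty →
          (Mscale G v (l - i) : ℝ) ≤ C * 2 ^ i ∧
          c * (2 : ℝ) ^ (((d - 1 : ℝ) / d) * i) ≤ (mscale G v (l - i) : ℝ)) →
      ∀ φ : V → ℝ, φ a - φ b = 1 →
        (d = 2 → c' / l ≤ dirichletEnergy G φ) ∧
        (3 ≤ d → c' ≤ dirichletEnergy G φ) := by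
  refine ⟨1 / (4 + 20 * C / c ^ 2), by positivity, ?_⟩
  intro V _ G hG l _ hn a b _ hyp φ hφ
  have hE := one_le_two_mul_sum_scaleWeight_mul_dirichletEnergy hG hn hφ
  have hW := sum_scaleWeight_le hG hn hC.le hc fun i h1 h2 => hyp i h1 h2 a (Set.mem_insert a _)
  have hE0 := dirichletEnergy_nonneg (G := G) φ
  have hK : 0 ≤ 2 * C / c ^ 2 := by positivity
  rw [show 20 * C / c ^ 2 = 10 * (2 * C / c ^ 2) by ring]
  refine ⟨fun hd => ?_, fun hd => ?_⟩
  · subst hd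
    rcases l.eq_zero_or_pos with rfl | hl
    · simpa using hE0
    have hρ : (2 : ℝ) ^ (1 - 2 * (((2 : ℕ) - 1 : ℝ) / (2 : ℕ))) = 1 := by norm_num
    simp only [hρ, one_pow, sum_const, card_range, nsmul_eq_mul, mul_one] at hW
    have hl1 : (1 : ℝ) ≤ l := by exact_mod_cast hl
    rw [div_div, div_le_iff₀ (by positivity)]
    nlinarith [mul_le_mul_of_nonneg_right hW hE0, mul_nonneg hE0 (sub_nonneg.2 hl1),
      mul_nonneg (mul_nonneg hK (by positivity : (0 : ℝ) ≤ l)) hE0]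
  · have hgeo := sum_pow_succ_le_five (by positivity) (two_rpow_pow_three_le hd) l
    rw [div_le_iff₀ (by positivity)]
    nlinarith [mul_le_mul_of_nonneg_right hW hE0,
      mul_le_mul_of_nonneg_right hgeo (mul_nonneg hK hE0)]

/-- **Quadratic energy bound for graphs with `ℤ^d`-isoperimetry.**
Let `d ≥ 2`, `C, c > 0`.  There is `c' = c'(d, C, c) > 0` such that: for every
finite connected graph `G` with `2^l ≤ |V(G)| < 2^{l+1}` and vertices `a, b`
such that, whenever defined, `M_{l-i}(v) ≤ C 2^i` and
`m_{l-i}(v) ≥ c 2^{((d-1)/d) i}` for `1 ≤ i ≤ l`, `v ∈ {a, b}`, one has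
`inf {∑_e (∇_e φ)² : φ(a) - φ(b) = 1} ≥ c'/l` if `d = 2` and `≥ c'` if `d ≥ 3`. -/
theorem quadratic_energy_estimate (d : ℕ) (hd : 2 ≤ d) (C c : ℝ)
    (hC : 0 < C) (hc : 0 < c) :
    ∃ c' : ℝ, 0 < c' ∧
      ∀ (V : Type) (_ : Fintype V) (G : SimpleGraph V), G.Connected →
      ∀ l : ℕ, 2 ^ l ≤ Fintype.card V → Fintype.card V < 2 ^ (l + 1) →
      ∀ a b : V, a ≠ b →
      (∀ i : ℕ, 1 ≤ i → i ≤ l → ∀ v ∈ ({a, b} : Set V),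
        (scaleFamily G v (l - i)).Nonempty →
          (Mscale G v (l - i) : ℝ) ≤ C * 2 ^ i ∧
          c * (2 : ℝ) ^ (((d - 1 : ℝ) / d) * i) ≤ (mscale G v (l - i) : ℝ)) →
      ∀ φ : V → ℝ, φ a - φ b = 1 →
        (d = 2 → c' / l ≤ dirichletEnergy G φ) ∧
        (3 ≤ d → c' ≤ dirichletEnergy G φ) :=
  quadratic_energy_estimate_general d C c hC hc
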